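/- Let (E,τ) be a real locally convex space such that E endowed with the weak topology σ(E,E') is a μ-space. If every subset of E compact in σ(E,E') is compact in τ, then every subset of E that is functionally bounded in σ(E,E') has compact closure in (E,τ); in particular, every subset of E countably compact in σ(E,E') is countably compact in τ, and (E,τ) is a μ-space. -/

import Mathlib

open Filter Topology Bornology

/-- The weak topology σ(E,E') on a (locally convex) topological vector space `E`:
the initial topology with respect to all continuous linear functionals on `E`. -/
def weakTop (E : Type*) [AddCommGroup E] [Module ℝ E] [TopologicalSpace E] :
    TopologicalSpace E :=
  TopologicalSpace.induced (fun x (f : E →L[ℝ] ℝ) => f x) Pi.topologicalSpace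

/-- A set `A` is functionally bounded for the topology `t` if every `t`-continuous
real-valued function is bounded on `A`. -/
def FunBounded {E : Type*} (t : TopologicalSpace E) (A : Set E) : Prop :=
  ∀ f : E → ℝ, @Continuous E ℝ t _ f → ∃ C : ℝ, ∀ x ∈ A, |f x| ≤ C

/-- The Schur property: every sequence converging in the weak topology σ(E,E') to a point
converges to that point in the original topology. -/
def HasSchur (E : Type*) [AddCommGroup E] [Module ℝ E] [TopologicalSpace E] : Prop :=
  ∀ (u : ℕ → E) (a : E),
    Filter.Tendsto u Filter.atTop (@nhds E (weakTop E) a) →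
    Filter.Tendsto u Filter.atTop (nhds a)

/-- A set `A` is countably compact for the topology `t` if every sequence in `A` has a
cluster point belonging to `A`. -/
def CountablyCompactIn {E : Type*} (t : TopologicalSpace E) (A : Set E) : Prop :=
  ∀ u : ℕ → E, (∀ n, u n ∈ A) → ∃ a ∈ A, @MapClusterPt E t ℕ a Filter.atTop u

/-!
The τ-closure of a weakly functionally bounded set lies in its weak closure, which is weakly
compact because `E_w` is a μ-space, hence τ-compact. A weakly countably compact set is weakly
functionally bounded, so its τ-closure is compact; if `a` is a weak cluster point of a sequence,
compactness yields a τ-cluster point `b` of the sequence on which every functional takes the value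
it takes at `a`, and Hahn–Banach turns this into the τ-specialization `b ⤳ a`, making `a` a
τ-cluster point. Finally, τ-functionally bounded sets are weakly functionally bounded because
σ(E,E') is coarser than τ.
-/

section FunctionallyBounded

variable {X : Type*}

lemma FunBounded.of_le {t₁ t₂ : TopologicalSpace X} (h : t₁ ≤ t₂) {A : Set X}
    (hA : FunBounded t₁ A) : FunBounded t₂ A :=
  fun f hf => hA f (continuous_le_dom h hf)

lemma CountablyCompactIn.funBounded {t : TopologicalSpace X} {A : Set X}
    (hA : CountablyCompactIn t A) : FunBounded t A := by
  intro f hf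
  by_contra! hunbounded
  choose u huA hu using fun n : ℕ => hunbounded n
  obtain ⟨a, -, ha⟩ := hA u huA
  have hnear : ∃ᶠ n in atTop, |f (u n)| < |f a| + 1 :=
    ha.frequently ((@Continuous.tendsto _ _ t _ _ (continuous_abs.comp hf) a).eventually
      (eventually_lt_nhds (lt_add_one _)))
  obtain ⟨n, hn, hfar⟩ :=
    (hnear.and_eventually (tendsto_natCast_atTop_atTop.eventually_ge_atTop (|f a| + 1))).exists
  linarith [hu n]

end FunctionallyBounded

section WeakTopology

variable {E : Type*} [AddCommGroup E] [Module ℝ E] [τ : TopologicalSpace E]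

lemma le_weakTop : τ ≤ weakTop E := by
  rw [weakTop, ← continuous_iff_le_induced]
  exact continuous_pi fun f => f.continuous

lemma continuous_weakTop_clm (f : E →L[ℝ] ℝ) : Continuous[weakTop E, _] f :=
  @Continuous.comp E ((E →L[ℝ] ℝ) → ℝ) ℝ (weakTop E) _ _ (fun x g => g x) (fun g => g f)
    (continuous_apply f) continuous_induced_dom

lemma clm_eq_of_weakTop_nhds_inf_neBot {a b : E}
    (hab : (@nhds E (weakTop E) a ⊓ @nhds E (weakTop E) b).NeBot) (f : E →L[ℝ] ℝ) :
    f a = f b :=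
  have hf := @Continuous.tendsto _ _ (weakTop E) _ _ (continuous_weakTop_clm f)
  tendsto_nhds_unique' hab ((hf a).mono_left inf_le_left) ((hf b).mono_left inf_le_right)

variable [IsTopologicalAddGroup E] [ContinuousSMul ℝ E] [LocallyConvexSpace ℝ E]

lemma specializes_of_forall_clm_eq {a b : E} (hab : ∀ f : E →L[ℝ] ℝ, f a = f b) :
    b ⤳ a := by
  rw [specializes_iff_mem_closure]
  by_contra ha
  obtain ⟨f, c, hfa, hfb⟩ :=
    geometric_hahn_banach_point_closed (convex_singleton b).closure isClosed_closure ha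
  exact (hfa.trans (hfb b (subset_closure rfl))).ne (hab f)

lemma specializes_of_clusterPt_weakTop_nhds_inf {a b : E} {F : Filter E}
    (hb : ClusterPt b (@nhds E (weakTop E) a ⊓ F)) : b ⤳ a := by
  refine specializes_of_forall_clm_eq (clm_eq_of_weakTop_nhds_inf_neBot ?_)
  have hτb : 𝓝 b ≤ @nhds E (weakTop E) b := _root_.nhds_mono le_weakTop
  exact NeBot.mono hb (le_inf (inf_le_right.trans inf_le_left) (inf_le_left.trans hτb))

lemma CountablyCompactIn.of_weakTop {A : Set E} (hA : CountablyCompactIn (weakTop E) A)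
    (hcl : IsCompact (closure A)) : CountablyCompactIn τ A := by
  intro u hu
  obtain ⟨a, haA, ha⟩ := hA u hu
  have : (@nhds E (weakTop E) a ⊓ map u atTop).NeBot := ha
  have hF : @nhds E (weakTop E) a ⊓ map u atTop ≤ 𝓟 (closure A) :=
    inf_le_right.trans <| le_principal_iff.mpr <|
      mem_map.mpr <| univ_mem' fun n => subset_closure (hu n)
  obtain ⟨b, -, hb⟩ := hcl.exists_clusterPt hF
  exact ⟨a, haA,
    (specializes_of_clusterPt_weakTop_nhds_inf hb).clusterPt (hb.mono inf_le_right)⟩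

end WeakTopology

/-- Let `E` be a real locally convex space such that `E` with the weak
topology is a μ-space. If `E` weakly respects compactness, then every weakly functionally
bounded set has compact closure in `E`; in particular `E` weakly respects countable
compactness and `E` is a μ-space. -/
theorem weakly_respects_compactness_implies_funBounded_rel_compact
    (E : Type*) [AddCommGroup E] [Module ℝ E] [τ : TopologicalSpace E]
    [IsTopologicalAddGroup E] [ContinuousSMul ℝ E] [LocallyConvexSpace ℝ E]
    (hμw : ∀ A : Set E, FunBounded (weakTop E) A →
      @IsCompact E (weakTop E) (@closure E (weakTop E) A))
    (h : ∀ A : Set E, @IsCompact E (weakTop E) A → IsCompact A) :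
    (∀ A : Set E, FunBounded (weakTop E) A → IsCompact (closure A)) ∧
    (∀ A : Set E, CountablyCompactIn (weakTop E) A → CountablyCompactIn τ A) ∧
    (∀ A : Set E, FunBounded τ A → IsCompact (closure A)) := by
  have hcompact : ∀ A : Set E, FunBounded (weakTop E) A → IsCompact (closure A) := fun A hA =>
    (h _ (hμw A hA)).of_isClosed_subset isClosed_closure (closure.mono le_weakTop)
  exact ⟨hcompact, fun A hA => hA.of_weakTop (hcompact A hA.funBounded),
    fun A hA => hcompact A (hA.of_le le_weakTop)⟩
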